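/- Fix d ≥ 1, T > 0, ρ ∈ 𝒰, and x, y ∈ ℝ^d. Let Z: [0,∞) → ℝ^d be absolutely continuous with Z_0 = x - y, and suppose ℓ_1,…,ℓ_d: [0,∞)→[0,∞) are non-decreasing with ℓ_j(0)=0, τ_1,…,τ_d ≥ 0, and κ > 0 are such that ‖Z_t‖₁ + κ Σ_j ℓ_j(t ∧ τ_j) ≤ ‖Z_0‖₁ + d ∫_0^t ρ(‖Z_s‖₁) ds for all t ≥ 0. Then for all t ≥ 0: (a) ‖Z_t‖₁ ≤ G_ρ^{-1}(G_ρ(‖Z_0‖₁) + dt), and (b) κ Σ_j ℓ_j(t ∧ τ_j) ≤ Γ_ρ(dt, ‖Z_0‖₁), where Γ_ρ(T,r) = r + Tρ(G_ρ^{-1}(G_ρ(r)+T)). -/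

import Mathlib

open Set MeasureTheory Filter

/-- `G_ρ(r) = ∫_1^r du/ρ(u)`. -/
noncomputable def Grho (ρ : ℝ → ℝ) (r : ℝ) : ℝ := ∫ u in (1:ℝ)..r, 1 / ρ u

/-- Generalized inverse of `G_ρ`, with the convention `G_ρ⁻¹(-∞) = 0`. -/
noncomputable def GrhoInv (ρ : ℝ → ℝ) (s : ℝ) : ℝ := sInf {r : ℝ | 0 < r ∧ s ≤ Grho ρ r}

/-- `Γ_ρ(T, r) = r + T ρ(G_ρ⁻¹(G_ρ(r) + T))`. -/
noncomputable def GamRho (ρ : ℝ → ℝ) (T r : ℝ) : ℝ := r + T * ρ (GrhoInv ρ (Grho ρ r + T))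

/-! Since the `ℓ`-term is nonnegative, `u t := ‖Z_t‖₁` satisfies the integral inequality
`u t ≤ u 0 + d ∫_0^t ρ(u)`, and Bihari's lemma gives (a). For the proof of Bihari's lemma one
compares `u` with `φ ε t = u 0 + ε + d ∫_0^t ρ(max(u, ε))`: `G_ρ ∘ φ ε` grows at rate at most `d`,
and one lets `ε → 0`, where the Osgood condition handles `u 0 = 0`. Then (b) follows by bounding
`ρ(u s) ≤ ρ(G_ρ⁻¹(G_ρ(u 0) + d t))` for `s ≤ t` in the integral inequality. -/

open scoped Topology

lemma MonotoneOn.intervalIntegrable_comp {f u : ℝ → ℝ} {a b : ℝ} (hf : MonotoneOn f (Ici 0))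
    (hu : ContinuousOn u (uIcc a b)) (hu0 : ∀ s ∈ uIcc a b, 0 ≤ u s) :
    IntervalIntegrable (fun s => f (u s)) volume a b := by
  rw [intervalIntegrable_iff']
  obtain ⟨smin, hsmin, hmin⟩ := isCompact_uIcc.exists_isMinOn nonempty_uIcc hu
  obtain ⟨smax, hsmax, hmax⟩ := isCompact_uIcc.exists_isMaxOn nonempty_uIcc hu
  have hF : Monotone fun x => f (max x 0) := fun x y hxy =>
    hf (le_max_right x 0) (le_max_right y 0) (max_le_max_right 0 hxy)
  have hmeas : AEStronglyMeasurable (fun s => f (u s)) (volume.restrict (uIcc a b)) := by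
    refine (hF.measurable.comp_aemeasurable
      (hu.aemeasurable measurableSet_uIcc)).aestronglyMeasurable.congr ?_
    refine (ae_restrict_iff' measurableSet_uIcc).2 (Eventually.of_forall fun s hs => ?_)
    simp only [Function.comp_apply, max_eq_left (hu0 s hs)]
  refine IntegrableOn.of_bound isCompact_uIcc.measure_lt_top hmeas
    (max |f (u smin)| |f (u smax)|) ?_
  refine (ae_restrict_iff' measurableSet_uIcc).2 (Eventually.of_forall fun s hs => ?_)
  exact abs_le_max_abs_abs (hf (hu0 _ hsmin) (hu0 s hs) (hmin hs))
    (hf (hu0 s hs) (hu0 _ hsmax) (hmax hs))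

section Grho

variable {ρ : ℝ → ℝ}

lemma continuousOn_one_div_of_pos (hρc : ContinuousOn ρ (Ioi 0)) (hρpos : ∀ r > 0, 0 < ρ r) :
    ContinuousOn (fun u => 1 / ρ u) (Ioi 0) :=
  continuousOn_const.div hρc fun u hu => (hρpos u hu).ne'

lemma intervalIntegrable_one_div_of_pos (hρc : ContinuousOn ρ (Ioi 0))
    (hρpos : ∀ r > 0, 0 < ρ r) {a b : ℝ} (ha : 0 < a) (hb : 0 < b) :
    IntervalIntegrable (fun u => 1 / ρ u) volume a b :=
  ((continuousOn_one_div_of_pos hρc hρpos).mono fun _ hx =>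
    (lt_min ha hb).trans_le hx.1).intervalIntegrable

lemma hasDerivAt_Grho (hρc : ContinuousOn ρ (Ioi 0)) (hρpos : ∀ r > 0, 0 < ρ r)
    {r : ℝ} (hr : 0 < r) : HasDerivAt (Grho ρ) (1 / ρ r) r :=
  intervalIntegral.integral_hasDerivAt_right
    (intervalIntegrable_one_div_of_pos hρc hρpos one_pos hr)
    ((continuousOn_one_div_of_pos hρc hρpos).stronglyMeasurableAtFilter isOpen_Ioi r hr)
    ((continuousOn_one_div_of_pos hρc hρpos).continuousAt (Ioi_mem_nhds hr))

lemma strictMonoOn_Grho (hρc : ContinuousOn ρ (Ioi 0)) (hρpos : ∀ r > 0, 0 < ρ r) :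
    StrictMonoOn (Grho ρ) (Ioi 0) := by
  refine strictMonoOn_of_deriv_pos (convex_Ioi 0)
    (fun r hr => (hasDerivAt_Grho hρc hρpos hr).continuousAt.continuousWithinAt) fun r hr => ?_
  rw [interior_Ioi] at hr
  rw [(hasDerivAt_Grho hρc hρpos hr).deriv]
  exact one_div_pos.2 (hρpos r hr)

lemma log_le_mul_Grho (hρc : ContinuousOn ρ (Ioi 0)) (hρpos : ∀ r > 0, 0 < ρ r)
    {C : ℝ} (hC : 0 < C) (hlin : ∀ r > 0, ρ r ≤ C * (1 + r)) {r : ℝ} (hr : 1 ≤ r) :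
    Real.log r ≤ 2 * C * Grho ρ r := by
  have hint : ∫ u in (1:ℝ)..r, (2 * C)⁻¹ * (1 / u) ≤ Grho ρ r := by
    refine intervalIntegral.integral_mono_on hr
      (((intervalIntegrable_one_div_of_pos continuousOn_id (fun _ h => h) one_pos
        (by linarith)).const_mul _))
      (intervalIntegrable_one_div_of_pos hρc hρpos one_pos (by linarith)) fun u hu => ?_
    have hu0 : 0 < u := one_pos.trans_le hu.1
    have hρu : ρ u ≤ 2 * C * u := by nlinarith [hlin u hu0, hu.1]
    calc (2 * C)⁻¹ * (1 / u) = 1 / (2 * C * u) := by field_simp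
      _ ≤ 1 / ρ u := one_div_le_one_div_of_le (hρpos u hu0) hρu
  rw [intervalIntegral.integral_const_mul, integral_one_div_of_pos one_pos (by linarith),
    div_one, inv_mul_le_iff₀ (by positivity)] at hint
  exact hint

lemma exists_le_Grho (hρc : ContinuousOn ρ (Ioi 0)) (hρpos : ∀ r > 0, 0 < ρ r)
    (hρlin : ∃ C > 0, ∀ r > 0, ρ r ≤ C * (1 + r)) (s : ℝ) :
    ∃ r, 0 < r ∧ s ≤ Grho ρ r := by
  obtain ⟨C, hC, hlin⟩ := hρlin
  set r := max 1 (Real.exp (2 * C * s))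
  have hr : 1 ≤ r := le_max_left _ _
  refine ⟨r, one_pos.trans_le hr, le_of_mul_le_mul_left ?_ (by positivity : 0 < 2 * C)⟩
  calc 2 * C * s = Real.log (Real.exp (2 * C * s)) := (Real.log_exp _).symm
    _ ≤ Real.log r := Real.log_le_log (Real.exp_pos _) (le_max_right _ _)
    _ ≤ 2 * C * Grho ρ r := log_le_mul_Grho hρc hρpos hC hlin hr

lemma GrhoInv_nonneg (s : ℝ) : 0 ≤ GrhoInv ρ s :=
  Real.sInf_nonneg fun _ hr => hr.1.le

lemma monotone_GrhoInv (hρc : ContinuousOn ρ (Ioi 0)) (hρpos : ∀ r > 0, 0 < ρ r)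
    (hρlin : ∃ C > 0, ∀ r > 0, ρ r ≤ C * (1 + r)) : Monotone (GrhoInv ρ) := fun _ s' h =>
  csInf_le_csInf ⟨0, fun _ hr => hr.1.le⟩ (exists_le_Grho hρc hρpos hρlin s')
    fun _ hr => ⟨hr.1, h.trans hr.2⟩

lemma eventually_Grho_add_lt (hρc : ContinuousOn ρ (Ioi 0)) (hρpos : ∀ r > 0, 0 < ρ r)
    (hOsgood : Tendsto (fun ε => ∫ u in ε..(1:ℝ), 1 / ρ u) (𝓝[>] 0) atTop)
    {c s : ℝ} (hc : 0 ≤ c) (hs : Grho ρ c < s) :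
    ∀ᶠ ε in 𝓝[>] 0, Grho ρ (c + ε) < s := by
  rcases hc.eq_or_lt with rfl | hc
  · have hbot : Tendsto (fun ε => Grho ρ (0 + ε)) (𝓝[>] 0) atBot := by
      simpa only [zero_add, Grho, intervalIntegral.integral_symm (1:ℝ), Function.comp_def, neg_neg]
        using tendsto_neg_atTop_atBot.comp hOsgood
    exact hbot.eventually_lt_atBot s
  · have hshift : Tendsto (fun ε => c + ε) (𝓝[>] 0) (𝓝 c) :=
      ((continuous_const_add c).tendsto' 0 c (add_zero c)).mono_left nhdsWithin_le_nhds
    exact ((hasDerivAt_Grho hρc hρpos hc).continuousAt.tendsto.comp hshift).eventually_lt_const hs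

end Grho

section Bihari

variable {ρ : ℝ → ℝ}

lemma Grho_comp_le_of_hasDerivAt (hρc : ContinuousOn ρ (Ioi 0)) (hρpos : ∀ r > 0, 0 < ρ r)
    {φ φ' : ℝ → ℝ} {k : ℝ} (hφ : ∀ t ≥ 0, HasDerivAt φ (φ' t) t) (hφpos : ∀ t ≥ 0, 0 < φ t)
    (hφ' : ∀ t ≥ 0, φ' t ≤ k * ρ (φ t)) {t : ℝ} (ht : 0 ≤ t) :
    Grho ρ (φ t) ≤ Grho ρ (φ 0) + k * t := by
  have hψ : ∀ t ≥ 0, HasDerivAt (fun t => Grho ρ (φ t) - k * t) (1 / ρ (φ t) * φ' t - k) t :=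
    fun t ht => ((hasDerivAt_Grho hρc hρpos (hφpos t ht)).comp t (hφ t ht)).sub
      (by simpa using (hasDerivAt_id t).const_mul k)
  have hanti : AntitoneOn (fun t => Grho ρ (φ t) - k * t) (Ici 0) := by
    refine antitoneOn_of_hasDerivWithinAt_nonpos (convex_Ici 0)
      (fun t ht => (hψ t ht).continuousAt.continuousWithinAt)
      (fun t ht => (hψ t (interior_subset ht)).hasDerivWithinAt) fun t ht => ?_
    have hρφ := hρpos _ (hφpos t (interior_subset ht))
    rw [sub_nonpos, one_div_mul_eq_div, div_le_iff₀ hρφ]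
    exact hφ' t (interior_subset ht)
  have := hanti self_mem_Ici ht ht
  simp only [mul_zero, sub_zero] at this
  linarith

variable {u : ℝ → ℝ} {c k : ℝ}

lemma Grho_max_le_of_le_integral (hρc : ContinuousOn ρ (Ioi 0)) (hρpos : ∀ r > 0, 0 < ρ r)
    (hρmono : MonotoneOn ρ (Ici 0)) (hu : ContinuousOn u (Ici 0)) (hu0 : ∀ s ≥ 0, 0 ≤ u s)
    (hc : 0 ≤ c) (hk : 0 ≤ k) (hle : ∀ t ≥ 0, u t ≤ c + k * ∫ s in (0:ℝ)..t, ρ (u s))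
    {ε : ℝ} (hε : 0 < ε) {t : ℝ} (ht : 0 ≤ t) :
    Grho ρ (max (u t) ε) ≤ Grho ρ (c + ε) + k * t := by
  -- `u ∘ (max · 0)` extends `u` continuously to all of `ℝ`
  set v : ℝ → ℝ := fun s => max (u (max s 0)) ε
  have hv_eq : ∀ s ≥ 0, v s = max (u s) ε := fun s hs => by simp only [v, max_eq_left hs]
  have hvpos : ∀ s, 0 < v s := fun _ => lt_max_of_lt_right hε
  have hv : Continuous v :=
    (hu.comp_continuous (continuous_id.max continuous_const) fun s => le_max_right s 0).max
      continuous_const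
  have hρv : Continuous fun s => ρ (v s) := continuous_iff_continuousAt.2 fun s =>
    (hρc.continuousAt (Ioi_mem_nhds (hvpos s))).comp hv.continuousAt
  set φ : ℝ → ℝ := fun t => c + ε + k * ∫ s in (0:ℝ)..t, ρ (v s)
  have hφ : ∀ t, HasDerivAt φ (k * ρ (v t)) t := fun t =>
    ((hρv.integral_hasStrictDerivAt 0 t).hasDerivAt.const_mul k).const_add _
  have hcε_le : ∀ t ≥ 0, c + ε ≤ φ t := fun t ht => le_add_of_nonneg_right <|
    mul_nonneg hk (intervalIntegral.integral_nonneg ht fun s _ => (hρpos _ (hvpos s)).le)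
  have hφpos : ∀ t ≥ 0, 0 < φ t := fun t ht => (by linarith : 0 < c + ε).trans_le (hcε_le t ht)
  have hmax_le : ∀ t ≥ 0, max (u t) ε ≤ φ t := by
    intro t ht
    have hsub : uIcc 0 t ⊆ Ici 0 := by rw [uIcc_of_le ht]; exact Icc_subset_Ici_self
    have hint : ∫ s in (0:ℝ)..t, ρ (u s) ≤ ∫ s in (0:ℝ)..t, ρ (v s) :=
      intervalIntegral.integral_mono_on ht
        (hρmono.intervalIntegrable_comp (hu.mono hsub) fun s hs => hu0 s (hsub hs))
        (hρv.intervalIntegrable _ _) fun s hs => by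
          rw [hv_eq s hs.1]
          exact hρmono (hu0 s hs.1) (lt_max_of_lt_right hε).le (le_max_left _ _)
    refine max_le ((hle t ht).trans ?_) (by linarith [hcε_le t ht])
    linarith [mul_le_mul_of_nonneg_left hint hk]
  have hφ_le : ∀ t ≥ 0, k * ρ (v t) ≤ k * ρ (φ t) := fun t ht => by
    gcongr
    exact hρmono (hvpos t).le (hφpos t ht).le (hv_eq t ht ▸ hmax_le t ht)
  calc Grho ρ (max (u t) ε) ≤ Grho ρ (φ t) :=
        (strictMonoOn_Grho hρc hρpos).monotoneOn (lt_max_of_lt_right hε) (hφpos t ht)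
          (hmax_le t ht)
    _ ≤ Grho ρ (φ 0) + k * t :=
        Grho_comp_le_of_hasDerivAt hρc hρpos (fun t _ => hφ t) hφpos hφ_le ht
    _ = Grho ρ (c + ε) + k * t := by simp [φ]

theorem le_GrhoInv_of_le_integral (hρc : ContinuousOn ρ (Ioi 0)) (hρpos : ∀ r > 0, 0 < ρ r)
    (hρmono : MonotoneOn ρ (Ici 0)) (hρlin : ∃ C > 0, ∀ r > 0, ρ r ≤ C * (1 + r))
    (hOsgood : Tendsto (fun ε => ∫ u in ε..(1:ℝ), 1 / ρ u) (𝓝[>] 0) atTop)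
    (hu : ContinuousOn u (Ici 0)) (hu0 : ∀ s ≥ 0, 0 ≤ u s)
    (hc : 0 ≤ c) (hk : 0 ≤ k) (hle : ∀ t ≥ 0, u t ≤ c + k * ∫ s in (0:ℝ)..t, ρ (u s))
    {t : ℝ} (ht : 0 ≤ t) : u t ≤ GrhoInv ρ (Grho ρ c + k * t) := by
  refine le_csInf (exists_le_Grho hρc hρpos hρlin _) fun r ⟨hr, hGr⟩ => ?_
  refine le_of_forall_pos_le_add fun η hη => ?_
  have hrη : Grho ρ r < Grho ρ (r + η) :=
    strictMonoOn_Grho hρc hρpos hr (by simp only [mem_Ioi]; linarith) (by linarith)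
  obtain ⟨ε, hGε, hε⟩ := ((eventually_Grho_add_lt hρc hρpos hOsgood hc
    (by linarith : Grho ρ c < Grho ρ (r + η) - k * t)).and self_mem_nhdsWithin).exists
  have hGmax := Grho_max_le_of_le_integral hρc hρpos hρmono hu hu0 hc hk hle hε ht
  have hlt : max (u t) ε < r + η :=
    (strictMonoOn_Grho hρc hρpos).lt_iff_lt (lt_max_of_lt_right hε)
      (by simp only [mem_Ioi]; linarith) |>.1 (by linarith)
  exact (le_max_left _ _).trans hlt.le

theorem integral_le_mul_rho_GrhoInv (hρc : ContinuousOn ρ (Ioi 0)) (hρpos : ∀ r > 0, 0 < ρ r)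
    (hρmono : MonotoneOn ρ (Ici 0)) (hρlin : ∃ C > 0, ∀ r > 0, ρ r ≤ C * (1 + r))
    (hOsgood : Tendsto (fun ε => ∫ u in ε..(1:ℝ), 1 / ρ u) (𝓝[>] 0) atTop)
    (hu : ContinuousOn u (Ici 0)) (hu0 : ∀ s ≥ 0, 0 ≤ u s)
    (hc : 0 ≤ c) (hk : 0 ≤ k) (hle : ∀ t ≥ 0, u t ≤ c + k * ∫ s in (0:ℝ)..t, ρ (u s))
    {t : ℝ} (ht : 0 ≤ t) :
    ∫ s in (0:ℝ)..t, ρ (u s) ≤ t * ρ (GrhoInv ρ (Grho ρ c + k * t)) := by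
  have hsub : uIcc 0 t ⊆ Ici 0 := by rw [uIcc_of_le ht]; exact Icc_subset_Ici_self
  calc ∫ s in (0:ℝ)..t, ρ (u s) ≤ ∫ _ in (0:ℝ)..t, ρ (GrhoInv ρ (Grho ρ c + k * t)) := by
        refine intervalIntegral.integral_mono_on ht
          (hρmono.intervalIntegrable_comp (hu.mono hsub) fun s hs => hu0 s (hsub hs))
          intervalIntegrable_const fun s hs => hρmono (hu0 s hs.1) (GrhoInv_nonneg _) ?_
        refine (le_GrhoInv_of_le_integral hρc hρpos hρmono hρlin hOsgood hu hu0 hc hk hle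
          hs.1).trans (monotone_GrhoInv hρc hρpos hρlin ?_)
        gcongr
        exact hs.2
    _ = t * ρ (GrhoInv ρ (Grho ρ c + k * t)) := by simp

end Bihari

theorem coupling_apriori_bound_general (d : ℕ) (ρ : ℝ → ℝ)
    (hρc : ContinuousOn ρ (Ioi 0))
    (hρpos : ∀ r > 0, 0 < ρ r)
    (hρmono : MonotoneOn ρ (Ici 0))
    (hρlin : ∃ C > 0, ∀ r > 0, ρ r ≤ C * (1 + r))
    (hOsgood : Tendsto (fun ε => ∫ u in ε..(1:ℝ), 1 / ρ u) (nhdsWithin 0 (Ioi 0)) atTop)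
    (Z : ℝ → Fin d → ℝ)
    (hZac : ∃ g : ℝ → Fin d → ℝ,
      (∀ j, ∀ a b : ℝ, IntervalIntegrable (fun s => g s j) volume a b) ∧
      ∀ t ≥ (0:ℝ), ∀ j, Z t j = Z 0 j + ∫ s in (0:ℝ)..t, g s j)
    (ℓ : Fin d → ℝ → ℝ)
    (hℓnonneg : ∀ j, ∀ t ≥ (0:ℝ), 0 ≤ ℓ j t)
    (τ : Fin d → ℝ) (hτ : ∀ j, 0 ≤ τ j)
    (κ : ℝ) (hκ : 0 < κ)
    (hkey : ∀ t ≥ (0:ℝ),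
      (∑ j, |Z t j|) + κ * (∑ j, ℓ j (min t (τ j))) ≤
        (∑ j, |Z 0 j|) + (d : ℝ) * ∫ s in (0:ℝ)..t, ρ (∑ j, |Z s j|)) :
    ∀ t ≥ (0:ℝ),
      (∑ j, |Z t j|) ≤ GrhoInv ρ (Grho ρ (∑ j, |Z 0 j|) + (d : ℝ) * t) ∧
      κ * (∑ j, ℓ j (min t (τ j))) ≤ GamRho ρ ((d : ℝ) * t) (∑ j, |Z 0 j|) := by
  obtain ⟨g, hg_int, hg⟩ := hZac
  have hZ : ContinuousOn (fun t => ∑ j, |Z t j|) (Ici 0) :=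
    continuousOn_finsetSum _ fun j _ => ContinuousOn.abs <|
      (continuous_const.add (intervalIntegral.continuous_primitive (hg_int j) 0)).continuousOn.congr
        fun t ht => hg t ht j
  have hZ0 : ∀ s ≥ (0:ℝ), 0 ≤ ∑ j, |Z s j| := fun _ _ => by positivity
  have hℓ : ∀ t ≥ (0:ℝ), 0 ≤ κ * ∑ j, ℓ j (min t (τ j)) := fun t ht =>
    mul_nonneg hκ.le (Finset.sum_nonneg fun j _ => hℓnonneg j _ (le_min ht (hτ j)))
  have hle : ∀ t ≥ (0:ℝ), ∑ j, |Z t j| ≤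
      ∑ j, |Z 0 j| + (d : ℝ) * ∫ s in (0:ℝ)..t, ρ (∑ j, |Z s j|) := fun t ht => by
    linarith [hkey t ht, hℓ t ht]
  intro t ht
  refine ⟨le_GrhoInv_of_le_integral hρc hρpos hρmono hρlin hOsgood hZ hZ0 (hZ0 0 le_rfl)
    d.cast_nonneg hle ht, ?_⟩
  have hint := integral_le_mul_rho_GrhoInv hρc hρpos hρmono hρlin hOsgood hZ hZ0 (hZ0 0 le_rfl)
    d.cast_nonneg hle ht
  calc κ * ∑ j, ℓ j (min t (τ j))
      ≤ ∑ j, |Z 0 j| + (d : ℝ) * ∫ s in (0:ℝ)..t, ρ (∑ j, |Z s j|) := by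
        linarith [hkey t ht, hZ0 t ht]
    _ ≤ ∑ j, |Z 0 j| + (d : ℝ) * (t * ρ (GrhoInv ρ (Grho ρ (∑ j, |Z 0 j|) + d * t))) := by
        gcongr
    _ = GamRho ρ ((d : ℝ) * t) (∑ j, |Z 0 j|) := by unfold GamRho; ring

/-- The coupling a priori bound: from
`‖Z_t‖₁ + κ Σ_j ℓ_j(t ∧ τ_j) ≤ ‖Z_0‖₁ + d∫_0^t ρ(‖Z_s‖₁) ds` one deduces
(a) `‖Z_t‖₁ ≤ G_ρ⁻¹(G_ρ(‖Z_0‖₁) + dt)` and (b) `κ Σ_j ℓ_j(t ∧ τ_j) ≤ Γ_ρ(dt, ‖Z_0‖₁)`. -/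
theorem coupling_apriori_bound (d : ℕ) (hd : 0 < d) (ρ : ℝ → ℝ)
    (hρc : ContinuousOn ρ (Ioi 0))
    (hρpos : ∀ r > 0, 0 < ρ r)
    (hρnonneg : ∀ r ≥ 0, 0 ≤ ρ r)
    (hρmono : MonotoneOn ρ (Ici 0))
    (hρlin : ∃ C > 0, ∀ r > 0, ρ r ≤ C * (1 + r))
    (hOsgood : Tendsto (fun ε => ∫ u in ε..(1:ℝ), 1 / ρ u) (nhdsWithin 0 (Ioi 0)) atTop)
    (T : ℝ) (hT : 0 < T) (x y : Fin d → ℝ)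
    (Z : ℝ → Fin d → ℝ) (hZ0 : Z 0 = x - y)
    (hZac : ∃ g : ℝ → Fin d → ℝ,
      (∀ j, ∀ a b : ℝ, IntervalIntegrable (fun s => g s j) volume a b) ∧
      ∀ t ≥ (0:ℝ), ∀ j, Z t j = Z 0 j + ∫ s in (0:ℝ)..t, g s j)
    (ℓ : Fin d → ℝ → ℝ)
    (hℓmono : ∀ j, MonotoneOn (ℓ j) (Ici 0))
    (hℓ0 : ∀ j, ℓ j 0 = 0) (hℓnonneg : ∀ j, ∀ t ≥ (0:ℝ), 0 ≤ ℓ j t)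
    (τ : Fin d → ℝ) (hτ : ∀ j, 0 ≤ τ j)
    (κ : ℝ) (hκ : 0 < κ)
    (hkey : ∀ t ≥ (0:ℝ),
      (∑ j, |Z t j|) + κ * (∑ j, ℓ j (min t (τ j))) ≤
        (∑ j, |Z 0 j|) + (d : ℝ) * ∫ s in (0:ℝ)..t, ρ (∑ j, |Z s j|)) :
    ∀ t ≥ (0:ℝ),
      (∑ j, |Z t j|) ≤ GrhoInv ρ (Grho ρ (∑ j, |Z 0 j|) + (d : ℝ) * t) ∧
      κ * (∑ j, ℓ j (min t (τ j))) ≤ GamRho ρ ((d : ℝ) * t) (∑ j, |Z 0 j|) :=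
  coupling_apriori_bound_general d ρ hρc hρpos hρmono hρlin hOsgood Z hZac ℓ hℓnonneg τ hτ κ hκ hkey
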